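/- arXiv:math/0301325 — 2 statements merged into one kernel-verified Lean document; each statement's English description precedes it below -/
import Mathlib

section
/- The homomorphism φ : F_n → F_{2n} between free groups determined by sending the i-th generator x_i to the commutator [x_{2i}, x_{2i+1}] (0 ≤ i < n) is injective. -/
/-!
The image of a reduced word `x_{i₁}^{e₁} ⋯ x_{iₖ}^{eₖ}` is the concatenation of the reduced words
of the commutators `⁅x_{2i_j}, x_{2i_j+1}⁆^{e_j}`. Each of these blocks starts with a positive
letter and ends with a negative one, so two adjacent blocks can only cancel if they are the two
mutually inverse blocks of the same generator, which a reduced word excludes. Hence the image word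
is reduced, and it is nonempty unless the original word was.
-/

open scoped commutatorElement

/-- The homomorphism `F_n → F_{2n}` sending the `i`-th generator `xᵢ` to the
commutator `⁅x_{2i}, x_{2i+1}⁆`. -/
noncomputable def phi (n : ℕ) : FreeGroup (Fin n) →* FreeGroup (Fin (2 * n)) :=
  FreeGroup.lift fun i =>
    ⁅FreeGroup.of (⟨2 * (i : ℕ), by have := i.isLt; omega⟩ : Fin (2 * n)),
     FreeGroup.of (⟨2 * (i : ℕ) + 1, by have := i.isLt; omega⟩ : Fin (2 * n))⁆

namespace FreeGroup

variable {α β : Type*}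

def commutatorWord (a b : β) : Bool → List (β × Bool)
  | true => [(a, true), (b, true), (a, false), (b, false)]
  | false => [(b, true), (a, true), (b, false), (a, false)]

theorem commutatorWord_ne_nil (a b : β) (e : Bool) : commutatorWord a b e ≠ [] := by
  cases e <;> simp [commutatorWord]

theorem mk_commutatorWord (a b : β) (e : Bool) :
    mk (commutatorWord a b e) = cond e ⁅of a, of b⁆ ⁅of a, of b⁆⁻¹ := by
  cases e <;> simp [commutatorWord, commutatorElement_def, of, inv_mk, invRev, mul_mk]

theorem lift_commutator_mk (a b : α → β) (L : List (α × Bool)) :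
    lift (fun i => ⁅of (a i), of (b i)⁆) (mk L) =
      mk (L.flatMap fun x => commutatorWord (a x.1) (b x.1) x.2) := by
  induction L with
  | nil => rfl
  | cons x L ih =>
    rw [← List.singleton_append, ← mul_mk, _root_.map_mul, ih, List.flatMap_append, ← mul_mk,
      List.flatMap_singleton, mk_commutatorWord, lift_mk]
    simp

variable {a b : α → β}

theorem isReduced_commutatorWord (hab : ∀ i j, a i ≠ b j) (i : α) (e : Bool) :
    IsReduced (commutatorWord (a i) (b i) e) := by
  have := hab i i
  cases e <;> simp [commutatorWord, IsReduced, this, this.symm]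

theorem commutatorWord_getLast?_head?_of_isReduced_pair (ha : a.Injective) (hb : b.Injective)
    (hab : ∀ i j, a i ≠ b j) {x y : α × Bool} (hxy : x.1 = y.1 → x.2 = y.2) :
    ∀ p ∈ (commutatorWord (a x.1) (b x.1) x.2).getLast?,
      ∀ q ∈ (commutatorWord (a y.1) (b y.1) y.2).head?, p.1 = q.1 → p.2 = q.2 := by
  obtain ⟨i, e⟩ := x
  obtain ⟨j, f⟩ := y
  cases e <;> cases f <;>
    simp_all [commutatorWord, (hab _ _).symm, ha.eq_iff, hb.eq_iff]

theorem isReduced_flatMap_commutatorWord (ha : a.Injective) (hb : b.Injective)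
    (hab : ∀ i j, a i ≠ b j) {L : List (α × Bool)} (hL : IsReduced L) :
    IsReduced (L.flatMap fun x => commutatorWord (a x.1) (b x.1) x.2) := by
  rw [IsReduced, List.flatMap_def, List.isChain_flatten (by simp [commutatorWord_ne_nil]),
    List.isChain_map]
  simp only [List.mem_map, forall_exists_index, and_imp, forall_apply_eq_imp_iff₂]
  exact ⟨fun x _ => isReduced_commutatorWord hab x.1 x.2,
    hL.imp fun _ _ => commutatorWord_getLast?_head?_of_isReduced_pair ha hb hab⟩

theorem lift_commutator_injective (ha : a.Injective) (hb : b.Injective)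
    (hab : ∀ i j, a i ≠ b j) : Function.Injective (lift fun i => ⁅of (a i), of (b i)⁆) := by
  classical
  refine (injective_iff_map_eq_one _).2 fun w hw => ?_
  rw [← mk_toWord (x := w), lift_commutator_mk] at hw
  have hblocks_nil := congrArg toWord hw
  rw [toWord_mk, toWord_one,
    (isReduced_flatMap_commutatorWord ha hb hab isReduced_toWord).reduce_eq,
    List.flatMap_eq_nil_iff] at hblocks_nil
  rw [← toWord_eq_nil_iff, List.eq_nil_iff_forall_not_mem]
  exact fun x hx => commutatorWord_ne_nil _ _ _ (hblocks_nil x hx)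

end FreeGroup

/-- The homomorphism `φ : F_n → F_{2n}` is injective. -/
theorem phi_injective (n : ℕ) : Function.Injective (phi n) :=
  FreeGroup.lift_commutator_injective (fun i j h => by simpa [Fin.ext_iff] using h)
    (fun i j h => by simpa [Fin.ext_iff] using h) fun i j h => by simp [Fin.ext_iff] at h; omega
end

section
/- Let φ : F_n → F_{2n} be the homomorphism between free groups sending the i-th generator x_i to the commutator [x_{2i}, x_{2i+1}] (0 ≤ i < n). The image of φ is root-closed: if u ∈ F_{2n} and u^k lies in the image of φ for some nonzero integer k, then u lies in the image of φ. -/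
/-!
φ sends a reduced word in the `xᵢ^±` to the concatenation of the four-letter words of the
`φ(xᵢ)^±`, and this concatenation is again reduced. Hence `u` lies in the image exactly when its
reduced word is a *block word*, a concatenation of such blocks.

Write the reduced word of `u` as `c v c⁻¹` with `v` cyclically reduced; the reduced word of `u^N`
is then `c v^N c⁻¹`. In a block word the letters have signs `+ + - -` repeating with period 4,
so a block word containing `v^4` forces `4 ∣ |v|`. Rotating `v = v₁ v₂` so that `c v₁` ends at
a block boundary, the block word `c v^N c⁻¹ = (c v₁) (v₂ v₁)^(N-1) (v₂ c⁻¹)` can be cut at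
block boundaries, and gluing the outer pieces gives the block word `c v c⁻¹` of `u`.
-/

open scoped commutatorElement

theorem Subgroup.pow_natAbs_mem {G : Type*} [Group G] {H : Subgroup G} {g : G} {k : ℤ}
    (h : g ^ k ∈ H) : g ^ k.natAbs ∈ H := by
  rcases k.natAbs_eq with hk | hk <;> rw [hk] at h
  · simpa only [zpow_natCast] using h
  · simpa only [zpow_neg, zpow_natCast, inv_mem_iff] using h

theorem List.flatten_replicate_append_succ {α : Type*} (a b : List α) (m : ℕ) :
    (replicate (m + 1) (a ++ b)).flatten = a ++ (replicate m (b ++ a)).flatten ++ b := by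
  induction m with
  | zero => simp
  | succ m ih =>
    rw [replicate_succ', flatten_append, ih, replicate_succ' (n := m), flatten_append]
    simp

open FreeGroup List

section BlockWords

variable {n : ℕ}

def evenIdx (i : Fin n) : Fin (2 * n) := ⟨2 * i, by omega⟩

def oddIdx (i : Fin n) : Fin (2 * n) := ⟨2 * i + 1, by omega⟩

def phiBlock : Fin n × Bool → List (Fin (2 * n) × Bool)
  | (i, true) => [(evenIdx i, true), (oddIdx i, true), (evenIdx i, false), (oddIdx i, false)]
  | (i, false) => [(oddIdx i, true), (evenIdx i, true), (oddIdx i, false), (evenIdx i, false)]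

theorem length_phiBlock (a : Fin n × Bool) : (phiBlock a).length = 4 := by
  obtain ⟨i, _ | _⟩ := a <;> rfl

theorem phi_mk_singleton (a : Fin n × Bool) : phi n (mk [a]) = mk (phiBlock a) := by
  have of_eq (x : Fin (2 * n)) : of x = mk [(x, true)] := rfl
  obtain ⟨i, _ | _⟩ := a <;>
    simp [phi, lift_mk, commutatorElement_def, of_eq, inv_mk, mul_mk, invRev, phiBlock, evenIdx,
      oddIdx]

theorem phi_mk (l : List (Fin n × Bool)) : phi n (mk l) = mk (l.flatMap phiBlock) := by
  induction l with
  | nil => rfl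
  | cons a l ih =>
    rw [flatMap_cons, ← mul_mk, ← ih, ← phi_mk_singleton, ← _root_.map_mul, mul_mk,
      singleton_append]

theorem isReduced_phiBlock (a : Fin n × Bool) : IsReduced (phiBlock a) := by
  obtain ⟨i, _ | _⟩ := a <;> simp [phiBlock, evenIdx, oddIdx, Fin.ext_iff]

theorem phiBlock_boundary_reduced {a b : Fin n × Bool} (hab : a.1 = b.1 → a.2 = b.2) :
    ∀ x ∈ (phiBlock a).getLast?, ∀ y ∈ (phiBlock b).head?, x.1 = y.1 → x.2 = y.2 := by
  obtain ⟨i, _ | _⟩ := a <;> obtain ⟨j, _ | _⟩ := b <;>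
    simp_all [phiBlock, evenIdx, oddIdx, Fin.ext_iff] <;> omega

theorem isReduced_flatMap_phiBlock {l : List (Fin n × Bool)} (h : IsReduced l) :
    IsReduced (l.flatMap phiBlock) := by
  have hne : [] ∉ l.map phiBlock := by
    simp only [mem_map, not_exists, not_and]
    exact fun a _ => ne_nil_of_length_pos (by simp [length_phiBlock])
  rw [FreeGroup.IsReduced, flatMap_def, isChain_flatten hne, isChain_map]
  refine ⟨?_, h.imp fun _ _ => phiBlock_boundary_reduced⟩
  simp only [mem_map]
  rintro _ ⟨a, -, rfl⟩
  exact isReduced_phiBlock a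

theorem toWord_phi (g : FreeGroup (Fin n)) : (phi n g).toWord = g.toWord.flatMap phiBlock := by
  conv_lhs => rw [← mk_toWord (x := g)]
  rw [phi_mk, toWord_mk, (isReduced_flatMap_phiBlock isReduced_toWord).reduce_eq]

def IsBlockWord (w : List (Fin (2 * n) × Bool)) : Prop :=
  ∃ l : List (Fin n × Bool), l.flatMap phiBlock = w

theorem mem_range_phi_iff {u : FreeGroup (Fin (2 * n))} :
    u ∈ (phi n).range ↔ IsBlockWord u.toWord := by
  constructor
  · rintro ⟨g, rfl⟩
    exact ⟨g.toWord, (toWord_phi g).symm⟩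
  · rintro ⟨l, hl⟩
    exact ⟨mk l, by rw [phi_mk, hl, mk_toWord]⟩

namespace IsBlockWord

variable {s t v A B : List (Fin (2 * n) × Bool)}

theorem append (hA : IsBlockWord A) (hB : IsBlockWord B) : IsBlockWord (A ++ B) := by
  obtain ⟨l₁, rfl⟩ := hA
  obtain ⟨l₂, rfl⟩ := hB
  exact ⟨l₁ ++ l₂, flatMap_append⟩

theorem of_append (h : IsBlockWord (A ++ B)) (hA : 4 ∣ A.length) :
    IsBlockWord A ∧ IsBlockWord B := by
  obtain ⟨l, hl⟩ := h
  induction l generalizing A with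
  | nil =>
    obtain ⟨rfl, rfl⟩ := append_eq_nil_iff.mp hl.symm
    exact ⟨⟨[], rfl⟩, ⟨[], rfl⟩⟩
  | cons a l ih =>
    rw [flatMap_cons, append_eq_append_iff] at hl
    rcases hl with ⟨A', rfl, hA'⟩ | ⟨C, hC, rfl⟩
    · rw [length_append, length_phiBlock] at hA
      obtain ⟨⟨l', rfl⟩, hB⟩ := ih (by omega) hA'
      exact ⟨⟨a :: l', rfl⟩, hB⟩
    · have hlen := congrArg length hC
      simp only [length_append, length_phiBlock] at hlen
      obtain hA0 | hA4 : A.length = 0 ∨ A.length = 4 := by omega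
      · rw [length_eq_zero_iff.mp hA0] at hC ⊢
        exact ⟨⟨[], rfl⟩, ⟨a :: l, by rw [flatMap_cons, hC]; rfl⟩⟩
      · obtain rfl : C = [] := length_eq_zero_iff.mp (by omega)
        rw [append_nil] at hC
        exact ⟨⟨[a], by simp [hC]⟩, ⟨l, by simp⟩⟩

theorem snd_eq_of_append_cons {x : Fin (2 * n) × Bool} (h : IsBlockWord (s ++ x :: t)) :
    x.2 = decide (s.length % 4 < 2) := by
  obtain ⟨l, hl⟩ := h
  induction l generalizing s with
  | nil => simp at hl
  | cons a l ih =>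
    obtain ⟨i, b⟩ := a
    rcases s with _ | ⟨_, _ | ⟨_, _ | ⟨_, _ | ⟨_, s⟩⟩⟩⟩
    all_goals
      cases b <;> simp only [flatMap_cons, phiBlock, cons_append, nil_append, cons.injEq] at hl
    all_goals grind

theorem four_dvd_length_of_flatten_replicate {m : ℕ}
    (h : IsBlockWord (s ++ (replicate m v).flatten ++ t)) (hm : 4 ≤ m) : 4 ∣ v.length := by
  rcases eq_or_ne v [] with rfl | hv
  · simp
  obtain ⟨k, rfl⟩ := Nat.exists_eq_add_of_le' hm
  set Y := (replicate (k + 3) v).flatten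
  have hright : (replicate (k + 4) v).flatten = v ++ Y := by rw [replicate_succ, flatten_cons]
  have hleft : (replicate (k + 4) v).flatten = Y ++ v := by
    rw [replicate_succ', flatten_append, flatten_singleton]
  have sign (j : ℕ) (hj : j < Y.length) :
      decide ((s.length + j) % 4 < 2) = decide ((s.length + v.length + j) % 4 < 2) := by
    have hY : Y = Y.take j ++ Y[j] :: Y.drop (j + 1) := by
      rw [← drop_eq_getElem_cons, take_append_drop]
    have e₁ := snd_eq_of_append_cons (s := s ++ Y.take j) (x := Y[j])
        (t := Y.drop (j + 1) ++ v ++ t) <| by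
      rw [hleft, hY] at h
      simpa only [append_assoc, cons_append] using h
    have e₂ := snd_eq_of_append_cons (s := s ++ v ++ Y.take j) (x := Y[j])
        (t := Y.drop (j + 1) ++ t) <| by
      rw [hright, hY] at h
      simpa only [append_assoc, cons_append] using h
    simp only [length_append, length_take_of_le hj.le] at e₁ e₂
    rw [← e₁, ← e₂]
  have hYlen : 3 ≤ Y.length := by
    have := length_pos_of_ne_nil hv
    simp only [Y, length_flatten, map_replicate, sum_replicate, smul_eq_mul]
    nlinarith
  have h0 := sign 0 (by omega)
  have h1 := sign 1 (by omega)
  have h2 := sign 2 (by omega)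
  simp only [decide_eq_decide] at h0 h1 h2
  -- the pattern `+ + - -` is not invariant under a shift by `|v|` on three consecutive places
  -- unless `4 ∣ |v|`
  omega

theorem of_flatten_replicate {m : ℕ} (h : IsBlockWord (s ++ (replicate m v).flatten ++ t))
    (hm : m ≠ 0) (hv : 4 ∣ v.length) : IsBlockWord (s ++ v ++ t) := by
  rcases eq_or_ne v [] with rfl | hv₀
  · simpa using h
  obtain ⟨m, rfl⟩ := Nat.exists_eq_succ_of_ne_zero hm
  obtain ⟨k, hk, hkv⟩ : ∃ k, 4 ∣ s.length + k ∧ k ≤ v.length := by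
    have := length_pos_of_ne_nil hv₀
    exact ⟨(4 - s.length % 4) % 4, by omega, by omega⟩
  set v₁ := v.take k
  set v₂ := v.drop k
  rw [← take_append_drop k v, flatten_replicate_append_succ] at h
  replace h : IsBlockWord ((s ++ v₁) ++ ((replicate m (v₂ ++ v₁)).flatten ++ (v₂ ++ t))) := by
    simpa only [append_assoc] using h
  have hv₁ : 4 ∣ (s ++ v₁).length := by simpa [v₁, hkv] using hk
  have hv₂₁ : 4 ∣ ((replicate m (v₂ ++ v₁)).flatten).length := by
    have hrot : (v₂ ++ v₁).length = v.length := by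
      simp only [v₁, v₂, length_append, length_drop, length_take]
      omega
    simp only [length_flatten, map_replicate, sum_replicate, smul_eq_mul, hrot]
    exact hv.mul_left m
  obtain ⟨hA, hB⟩ := h.of_append hv₁
  have hC := (hB.of_append hv₂₁).2
  have hsplit : s ++ v₁ ++ (v₂ ++ t) = s ++ v ++ t := by
    rw [← append_assoc, append_assoc s, take_append_drop]
  exact hsplit ▸ hA.append hC

end IsBlockWord

end BlockWords

/-- The image of `φ : F_n → F_{2n}` is root-closed. -/
theorem range_phi_root_closed (n : ℕ) (u : FreeGroup (Fin (2 * n))) (k : ℤ)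
    (hk : k ≠ 0) (h : u ^ k ∈ (phi n).range) :
    u ∈ (phi n).range := by
  set m := 4 * k.natAbs
  have hm : u ^ m ∈ (phi n).range := by
    rw [pow_mul']
    exact pow_mem (Subgroup.pow_natAbs_mem h) 4
  have hm0 : m ≠ 0 := by simp [m, hk]
  rw [mem_range_phi_iff, toWord_pow,
    reduceCyclically.reduce_flatten_replicate isReduced_toWord, if_neg hm0] at hm
  rw [mem_range_phi_iff, ← reduceCyclically.conj_conjugator_reduceCyclically u.toWord]
  exact hm.of_flatten_replicate hm0 (hm.four_dvd_length_of_flatten_replicate (by omega))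
end
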